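/- (Modulational expansion of the coefficient III.) Let g > 0, k₀ > 0, and χⱼ = (λⱼ, μⱼ) ∈ ℝ², j = 1,…,4, be fixed. Substitute k₁ = (k₀,0)+εχ₁, k₂ = (k₀,0)+εχ₂, k₃ = −((k₀,0)+εχ₃), k₄ = −((k₀,0)+εχ₄) into the coefficient III(k₁,k₂,k₃,k₄). Then, as ε → 0⁺, III = −(√2 + 1)·(k₀³/(16π²))·( 1 + (3ε/(4k₀))(λ₁+λ₂+λ₃+λ₄) ) + O(ε²). -/

import Mathlib

/-!
Along the four paths every norm, `ℓ` and detuning in `III` stays away from its singularities, so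
`ε ↦ III` is `C²` at `0` and agrees with its first-order Taylor polynomial up to `O(ε²)`. As
`III(k₁, k₂, -k₃, -k₄) = III(k₁, k₂, k₃, k₄)`, all four wave vectors start at `(k₀, 0)`, where the
value is computed directly. The first-order coefficient is a sum of logarithmic derivatives:
`λⱼ / k₀` for `‖kⱼ‖`, `(λᵢ + λⱼ) / (2k₀)` for `‖kᵢ + kⱼ‖` and for the `ℓ`-bracket of `(kᵢ, kⱼ)`,
`-(λᵢ + λⱼ) / (4k₀)` for the inverse detuning of `(kᵢ, kⱼ)`. The terms `ℓ_{k₁+k₂}^{-kⱼ}` have zero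
derivative because their numerator `‖a‖‖b‖ + a·b` is nonnegative by Cauchy–Schwarz and vanishes
at the antiparallel base point; likewise `‖a‖‖b‖ - a·b` is minimal at the parallel base point of
`ℓ_{k₁}^{k₂}`, so there `(‖a‖‖b‖)' = (a·b)'`.
-/

open Asymptotics Filter Topology

/-- Euclidean norm on ℝ². -/
noncomputable def norm2 (k : ℝ × ℝ) : ℝ := Real.sqrt (k.1 ^ 2 + k.2 ^ 2)

/-- Euclidean inner product on ℝ². -/
def dot (a b : ℝ × ℝ) : ℝ := a.1 * b.1 + a.2 * b.2

/-- Deep-water dispersion relation ω(k) = √(g‖k‖). -/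
noncomputable def omg (g : ℝ) (k : ℝ × ℝ) : ℝ := Real.sqrt (g * norm2 k)

/-- ℓ_a^b = (‖a‖‖b‖ + a·b)/√(‖a‖‖b‖). -/
noncomputable def ell (a b : ℝ × ℝ) : ℝ :=
  (norm2 a * norm2 b + dot a b) / Real.sqrt (norm2 a * norm2 b)

/-- The coefficient III of Proposition 4.3. -/
noncomputable def coefIII (g : ℝ) (k₁ k₂ k₃ k₄ : ℝ × ℝ) : ℝ :=
  -(Real.sqrt g / (128 * Real.pi ^ 2)) *
    (norm2 k₁ * norm2 k₂ * norm2 k₃ * norm2 k₄ * norm2 (k₁ + k₂) * norm2 (k₃ + k₄)) ^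
      ((1 : ℝ) / 4) *
    (ell (k₁ + k₂) (-k₁) + ell (k₁ + k₂) (-k₂) - ell k₁ k₂) *
    (ell (k₃ + k₄) (-k₃) + ell (k₃ + k₄) (-k₄) - ell k₃ k₄) *
    (1 / (omg g k₁ + omg g k₂ - omg g (k₁ + k₂))
      + 1 / (omg g k₃ + omg g k₄ - omg g (k₃ + k₄)))

lemma ContDiffAt.isBigO_sub_sub_mul_sq {f : ℝ → ℝ} {f' x₀ : ℝ} (hf : ContDiffAt ℝ 2 f x₀)
    (hf' : HasDerivAt f f' x₀) :
    (fun x => f x - f x₀ - f' * (x - x₀)) =O[𝓝 x₀] fun x => (x - x₀) ^ 2 := by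
  -- mean value theorem on `[x₀, x]` for the remainder, whose derivative is `O(y - x₀)`
  obtain rfl := hf'.deriv
  obtain ⟨C, hC₀, hC⟩ := ((hf.derivWithin (m := 1) (by norm_num)).differentiableAt
    one_ne_zero).isBigO_sub.exists_pos
  have hdiff : ∀ᶠ x in 𝓝 x₀, DifferentiableAt ℝ f x :=
    (hf.eventually (by simp)).mono fun x hx => hx.differentiableAt (by norm_num)
  obtain ⟨r, hr, hball⟩ := Metric.eventually_nhds_iff_ball.1 (hC.bound.and hdiff)
  refine IsBigO.of_bound C ?_
  filter_upwards [Metric.ball_mem_nhds x₀ hr] with x hx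
  have hseg : segment ℝ x₀ x ⊆ Metric.ball x₀ r :=
    (convex_ball x₀ r).segment_subset (Metric.mem_ball_self hr) hx
  have hmvt := (convex_segment x₀ x).norm_image_sub_le_of_norm_hasDerivWithin_le
    (f := fun y => f y - deriv f x₀ * (y - x₀)) (f' := fun y => deriv f y - deriv f x₀)
    (C := C * ‖x - x₀‖)
    (fun y hy => (((hball y (hseg hy)).2.hasDerivAt.sub
      (((hasDerivAt_id y).sub_const x₀).const_mul (deriv f x₀))).congr_deriv
      (by simp)).hasDerivWithinAt)
    (fun y hy => ((hball y (hseg hy)).1).trans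
      (mul_le_mul_of_nonneg_left (norm_sub_le_of_mem_segment hy) hC₀.le))
    (left_mem_segment ℝ x₀ x) (right_mem_segment ℝ x₀ x)
  simpa [norm_pow, sq, mul_assoc, sub_right_comm] using hmvt

/-- Predicate form of `logDeriv f x = a`, stated without dividing by `f x`. -/
def HasLogDerivAt (f : ℝ → ℝ) (a x : ℝ) : Prop := HasDerivAt f (a * f x) x

namespace HasLogDerivAt

variable {f g : ℝ → ℝ} {a b x : ℝ}

lemma mul (hf : HasLogDerivAt f a x) (hg : HasLogDerivAt g b x) :
    HasLogDerivAt (fun y => f y * g y) (a + b) x :=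
  (HasDerivAt.fun_mul hf hg).congr_deriv (by ring)

lemma const_mul (c : ℝ) (hf : HasLogDerivAt f a x) : HasLogDerivAt (fun y => c * f y) a x :=
  (HasDerivAt.const_mul c hf).congr_deriv (by ring)

lemma rpow_const (hf : HasLogDerivAt f a x) (hx : 0 < f x) (r : ℝ) :
    HasLogDerivAt (fun y => f y ^ r) (r * a) x :=
  (HasDerivAt.rpow_const hf (Or.inl hx.ne')).congr_deriv (by
    rw [Real.rpow_sub_one hx.ne']; field_simp)

lemma sqrt (hf : HasLogDerivAt f a x) (hx : 0 < f x) : HasLogDerivAt (fun y => √(f y)) (a / 2) x :=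
  (HasDerivAt.sqrt hf hx.ne').congr_deriv (by
    have := Real.sqrt_pos.2 hx
    nth_rw 1 [← Real.sq_sqrt hx.le]
    field_simp)

lemma one_div (hf : HasLogDerivAt f a x) (hx : f x ≠ 0) :
    HasLogDerivAt (fun y => 1 / f y) (-a) x :=
  ((hasDerivAt_const x 1).fun_div hf hx).congr_deriv (by field_simp; ring)

lemma add_of_eq (hf : HasLogDerivAt f a x) (hg : HasLogDerivAt g b x) (h : f x = g x) :
    HasLogDerivAt (fun y => f y + g y) ((a + b) / 2) x :=
  (HasDerivAt.fun_add hf hg).congr_deriv (by show _ = _ * (f x + g x); rw [h]; ring)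

end HasLogDerivAt

lemma norm2_nonneg (a : ℝ × ℝ) : 0 ≤ norm2 a := Real.sqrt_nonneg _

lemma dot_self (a : ℝ × ℝ) : dot a a = norm2 a ^ 2 := by
  rw [norm2, Real.sq_sqrt (by positivity), dot]; ring

lemma norm2_pos {a : ℝ × ℝ} (ha : a ≠ 0) : 0 < norm2 a := by
  refine Real.sqrt_pos.2 ?_
  rcases a with ⟨a₁, a₂⟩
  by_cases h : a₁ = 0
  · have : a₂ ≠ 0 := fun h' => ha (by simp [h, h'])
    positivity
  · positivity

lemma norm2_neg (a : ℝ × ℝ) : norm2 (-a) = norm2 a := by simp [norm2]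

lemma dot_comm (a b : ℝ × ℝ) : dot a b = dot b a := by simp only [dot]; ring

lemma dot_neg_neg (a b : ℝ × ℝ) : dot (-a) (-b) = dot a b := by simp [dot]

lemma abs_dot_le (a b : ℝ × ℝ) : |dot a b| ≤ norm2 a * norm2 b := by
  refine abs_le_of_sq_le_sq ?_ (mul_nonneg (norm2_nonneg a) (norm2_nonneg b))
  rw [mul_pow, ← dot_self, ← dot_self]
  unfold dot
  nlinarith [sq_nonneg (a.1 * b.2 - a.2 * b.1)]

lemma norm2_horizontal {c : ℝ} (hc : 0 ≤ c) : norm2 (c, 0) = c := by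
  simp [norm2, Real.sqrt_sq hc]

lemma dot_horizontal (c : ℝ) (b : ℝ × ℝ) : dot (c, 0) b = c * b.1 := by simp [dot]

noncomputable def ellBracket (k₁ k₂ : ℝ × ℝ) : ℝ :=
  ell (k₁ + k₂) (-k₁) + ell (k₁ + k₂) (-k₂) - ell k₁ k₂

noncomputable def detuning (g : ℝ) (k₁ k₂ : ℝ × ℝ) : ℝ :=
  omg g k₁ + omg g k₂ - omg g (k₁ + k₂)

lemma coefIII_eq_ellBracket_detuning (g : ℝ) (k₁ k₂ k₃ k₄ : ℝ × ℝ) :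
    coefIII g k₁ k₂ k₃ k₄ = -(Real.sqrt g / (128 * Real.pi ^ 2)) *
      (norm2 k₁ * norm2 k₂ * norm2 k₃ * norm2 k₄ * norm2 (k₁ + k₂) * norm2 (k₃ + k₄)) ^
        ((1 : ℝ) / 4) * ellBracket k₁ k₂ * ellBracket k₃ k₄ *
      (1 / detuning g k₁ k₂ + 1 / detuning g k₃ k₄) := rfl

lemma ell_neg_neg (a b : ℝ × ℝ) : ell (-a) (-b) = ell a b := by
  simp only [ell, norm2_neg, dot_neg_neg]

lemma omg_neg (g : ℝ) (a : ℝ × ℝ) : omg g (-a) = omg g a := by simp only [omg, norm2_neg]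

lemma ellBracket_neg_neg (a b : ℝ × ℝ) : ellBracket (-a) (-b) = ellBracket a b := by
  simp only [ellBracket, ← neg_add, ell_neg_neg]

lemma detuning_neg_neg (g : ℝ) (a b : ℝ × ℝ) : detuning g (-a) (-b) = detuning g a b := by
  simp only [detuning, ← neg_add, omg_neg]

lemma coefIII_neg_neg (g : ℝ) (k₁ k₂ k₃ k₄ : ℝ × ℝ) :
    coefIII g k₁ k₂ (-k₃) (-k₄) = coefIII g k₁ k₂ k₃ k₄ := by
  simp only [coefIII_eq_ellBracket_detuning, ← neg_add, norm2_neg, ellBracket_neg_neg,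
    detuning_neg_neg]

lemma norm2_add_self (a : ℝ × ℝ) : norm2 (a + a) = 2 * norm2 a := by
  rw [norm2, show (a + a).1 ^ 2 + (a + a).2 ^ 2 = (2 * norm2 a) ^ 2 by
    rw [mul_pow, ← dot_self, dot]; simp only [Prod.fst_add, Prod.snd_add]; ring]
  exact Real.sqrt_sq (by positivity [norm2_nonneg a])

lemma dot_add_self_neg (a : ℝ × ℝ) : dot (a + a) (-a) = -(norm2 (a + a) * norm2 (-a)) := by
  rw [norm2_add_self, norm2_neg, mul_assoc, ← sq, ← dot_self]
  simp only [dot, Prod.fst_add, Prod.snd_add, Prod.fst_neg, Prod.snd_neg]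
  ring

lemma ellBracket_self (a : ℝ × ℝ) : ellBracket a a = -(2 * norm2 a) := by
  rw [ellBracket, ell, ell, dot_add_self_neg, add_neg_cancel, zero_div,
    dot_self, Real.sqrt_mul_self (norm2_nonneg a)]
  rcases (norm2_nonneg a).eq_or_lt with h | h
  · simp [← h]
  · field_simp
    ring

lemma omg_add_self (g : ℝ) (a : ℝ × ℝ) : omg g (a + a) = √2 * omg g a := by
  rw [omg, omg, norm2_add_self, mul_left_comm, Real.sqrt_mul zero_le_two]

lemma detuning_self (g : ℝ) (a : ℝ × ℝ) : detuning g a a = (2 - √2) * omg g a := by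
  rw [detuning, omg_add_self]
  ring

lemma detuning_self_ne_zero {g : ℝ} (hg : 0 < g) {a : ℝ × ℝ} (ha : a ≠ 0) :
    detuning g a a ≠ 0 := by
  rw [detuning_self, omg]
  exact mul_ne_zero (by linarith [Real.sqrt_two_lt_three_halves])
    (Real.sqrt_pos.2 (mul_pos hg (norm2_pos ha))).ne'

lemma coefIII_horizontal {g c : ℝ} (hg : 0 < g) (hc : 0 < c) :
    coefIII g (c, 0) (c, 0) (c, 0) (c, 0) = -(√2 + 1) * (c ^ 3 / (16 * Real.pi ^ 2)) := by
  have hrpow : (c * c * c * c * (2 * c) * (2 * c)) ^ ((1 : ℝ) / 4) = √2 * c * √c := by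
    have h : c * c * c * c * (2 * c) * (2 * c) = (√2 * c * √c) ^ 4 := by
      have e : (√2 * c * √c) ^ 4 = (√2 ^ 2) ^ 2 * c ^ 4 * (√c ^ 2) ^ 2 := by ring
      rw [e, Real.sq_sqrt zero_le_two, Real.sq_sqrt hc.le]
      ring
    rw [h, show (1 : ℝ) / 4 = ((4 : ℕ) : ℝ)⁻¹ by norm_num,
      Real.pow_rpow_inv_natCast (by positivity) (by norm_num)]
  rw [coefIII_eq_ellBracket_detuning, ellBracket_self, detuning_self, norm2_add_self,
    norm2_horizontal hc.le, hrpow, omg, norm2_horizontal hc.le, Real.sqrt_mul hg.le]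
  have := Real.sqrt_pos.2 hg
  have := Real.sqrt_pos.2 hc
  have := Real.pi_pos
  have : 2 - √2 ≠ 0 := by linarith [Real.sqrt_two_lt_three_halves]
  field_simp
  linear_combination (-128 : ℝ) * Real.sq_sqrt zero_le_two

section Paths

variable {p r : ℝ → ℝ × ℝ} {p' r' : ℝ × ℝ} {x : ℝ} {n : WithTop ℕ∞}

lemma hasDerivAt_dot (hp : HasDerivAt p p' x) (hr : HasDerivAt r r' x) :
    HasDerivAt (fun y => dot (p y) (r y)) (dot p' (r x) + dot (p x) r') x := by
  have fst {q : ℝ → ℝ × ℝ} {q'} (hq : HasDerivAt q q' x) : HasDerivAt (fun y => (q y).1) q'.1 x :=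
    (ContinuousLinearMap.fst ℝ ℝ ℝ).hasFDerivAt.comp_hasDerivAt x hq
  have snd {q : ℝ → ℝ × ℝ} {q'} (hq : HasDerivAt q q' x) : HasDerivAt (fun y => (q y).2) q'.2 x :=
    (ContinuousLinearMap.snd ℝ ℝ ℝ).hasFDerivAt.comp_hasDerivAt x hq
  unfold dot
  exact (((fst hp).mul (fst hr)).add ((snd hp).mul (snd hr))).congr_deriv (by ring)

lemma hasDerivAt_norm2 (hp : HasDerivAt p p' x) (hx : p x ≠ 0) :
    HasDerivAt (fun y => norm2 (p y)) (dot (p x) p' / norm2 (p x)) x := by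
  have h := (hasDerivAt_dot hp hp).sqrt (by rw [dot_self]; exact (pow_pos (norm2_pos hx) 2).ne')
  simp only [dot_self, Real.sqrt_sq (norm2_nonneg _)] at h
  rwa [dot_comm p', ← two_mul, mul_div_mul_left _ _ two_ne_zero] at h

lemma contDiffAt_dot (hp : ContDiffAt ℝ n p x) (hr : ContDiffAt ℝ n r x) :
    ContDiffAt ℝ n (fun y => dot (p y) (r y)) x :=
  (hp.fst.mul hr.fst).add (hp.snd.mul hr.snd)

lemma contDiffAt_norm2 (hp : ContDiffAt ℝ n p x) (hx : p x ≠ 0) :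
    ContDiffAt ℝ n (fun y => norm2 (p y)) x := by
  have := (contDiffAt_dot hp hp).sqrt (by rw [dot_self]; exact (pow_pos (norm2_pos hx) 2).ne')
  simpa only [dot_self, Real.sqrt_sq (norm2_nonneg _)] using this

lemma hasDerivAt_ell_of_dot_eq_neg (hp : HasDerivAt p p' x) (hr : HasDerivAt r r' x)
    (hpx : p x ≠ 0) (hrx : r x ≠ 0) (h : dot (p x) (r x) = -(norm2 (p x) * norm2 (r x))) :
    HasDerivAt (fun y => ell (p y) (r y)) 0 x := by
  have hD := ((hasDerivAt_norm2 hp hpx).fun_mul (hasDerivAt_norm2 hr hrx))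
  have hN := hD.fun_add (hasDerivAt_dot hp hr)
  have hmin : IsLocalMin (fun y => norm2 (p y) * norm2 (r y) + dot (p y) (r y)) x :=
    IsMinOn.isLocalMin (fun y _ => by
      simp only [Set.mem_ofPred_eq, h, add_neg_cancel]
      linarith [neg_abs_le (dot (p y) (r y)), abs_dot_le (p y) (r y)]) Filter.univ_mem
  have hDx := mul_pos (norm2_pos hpx) (norm2_pos hrx)
  have := hN.fun_div (hD.sqrt hDx.ne') (Real.sqrt_pos.2 hDx).ne'
  simp only [hmin.hasDerivAt_eq_zero hN, h, add_neg_cancel, zero_mul, sub_zero, zero_div] at this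
  exact this

lemma hasDerivAt_ell_of_dot_eq (hp : HasDerivAt p p' x) (hr : HasDerivAt r r' x)
    (hpx : p x ≠ 0) (hrx : r x ≠ 0) (h : dot (p x) (r x) = norm2 (p x) * norm2 (r x)) :
    HasDerivAt (fun y => ell (p y) (r y))
      ((dot p' (r x) + dot (p x) r') / √(norm2 (p x) * norm2 (r x))) x := by
  have hD := ((hasDerivAt_norm2 hp hpx).fun_mul (hasDerivAt_norm2 hr hrx))
  have hP := hasDerivAt_dot hp hr
  have hmin : IsLocalMin (fun y => norm2 (p y) * norm2 (r y) - dot (p y) (r y)) x :=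
    IsMinOn.isLocalMin (fun y _ => by
      simp only [Set.mem_ofPred_eq, h, sub_self]
      linarith [le_abs_self (dot (p y) (r y)), abs_dot_le (p y) (r y)]) Filter.univ_mem
  have hDP := sub_eq_zero.1 (hmin.hasDerivAt_eq_zero (hD.fun_sub hP))
  have hDx := mul_pos (norm2_pos hpx) (norm2_pos hrx)
  have := (hD.fun_add hP).fun_div (hD.sqrt hDx.ne') (Real.sqrt_pos.2 hDx).ne'
  rw [hDP, h] at this
  refine this.congr_deriv ?_
  have hs := Real.sqrt_pos.2 hDx
  field_simp
  rw [Real.sq_sqrt hDx.le]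
  ring

lemma contDiffAt_ell (hp : ContDiffAt ℝ n p x) (hr : ContDiffAt ℝ n r x) (hpx : p x ≠ 0)
    (hrx : r x ≠ 0) : ContDiffAt ℝ n (fun y => ell (p y) (r y)) x := by
  have hD := (contDiffAt_norm2 hp hpx).mul (contDiffAt_norm2 hr hrx)
  have hDx := mul_pos (norm2_pos hpx) (norm2_pos hrx)
  exact (hD.add (contDiffAt_dot hp hr)).div (hD.sqrt hDx.ne') (Real.sqrt_pos.2 hDx).ne'

lemma hasDerivAt_ellBracket (hp : HasDerivAt p p' x) (hr : HasDerivAt r r' x)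
    (hpr : p x = r x) (hx : p x ≠ 0) :
    HasDerivAt (fun y => ellBracket (p y) (r y)) (-(dot (p x) (p' + r') / norm2 (p x))) x := by
  have hs : p x + r x ≠ 0 := by rw [← hpr, ← two_smul ℝ]; exact smul_ne_zero two_ne_zero hx
  have hsum := hp.fun_add hr
  have h₁ := hasDerivAt_ell_of_dot_eq_neg hsum hp.fun_neg hs (neg_ne_zero.2 hx)
    (by rw [← hpr]; exact dot_add_self_neg _)
  have h₂ := hasDerivAt_ell_of_dot_eq_neg hsum hr.fun_neg hs (neg_ne_zero.2 (hpr ▸ hx))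
    (by rw [← hpr]; exact dot_add_self_neg _)
  have h₃ := hasDerivAt_ell_of_dot_eq hp hr hx (hpr ▸ hx)
    (by rw [← hpr, dot_self, sq])
  refine ((h₁.add h₂).sub h₃).congr_deriv ?_
  rw [← hpr, Real.sqrt_mul_self (norm2_nonneg _)]
  simp only [dot, Prod.fst_add, Prod.snd_add]
  ring

lemma contDiffAt_omg {g : ℝ} (hg : g ≠ 0) (hp : ContDiffAt ℝ n p x) (hpx : p x ≠ 0) :
    ContDiffAt ℝ n (fun y => omg g (p y)) x :=
  (contDiffAt_const.mul (contDiffAt_norm2 hp hpx)).sqrt (mul_ne_zero hg (norm2_pos hpx).ne')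

lemma contDiffAt_ellBracket (hp : ContDiffAt ℝ n p x) (hr : ContDiffAt ℝ n r x) (hpx : p x ≠ 0)
    (hrx : r x ≠ 0) (hprx : p x + r x ≠ 0) :
    ContDiffAt ℝ n (fun y => ellBracket (p y) (r y)) x :=
  ((contDiffAt_ell (hp.add hr) hp.neg hprx (neg_ne_zero.2 hpx)).add
    (contDiffAt_ell (hp.add hr) hr.neg hprx (neg_ne_zero.2 hrx))).sub (contDiffAt_ell hp hr hpx hrx)

lemma contDiffAt_detuning {g : ℝ} (hg : g ≠ 0) (hp : ContDiffAt ℝ n p x)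
    (hr : ContDiffAt ℝ n r x) (hpx : p x ≠ 0) (hrx : r x ≠ 0) (hprx : p x + r x ≠ 0) :
    ContDiffAt ℝ n (fun y => detuning g (p y) (r y)) x :=
  ((contDiffAt_omg hg hp hpx).add (contDiffAt_omg hg hr hrx)).sub
    (contDiffAt_omg hg (hp.add hr) hprx)

variable {c : ℝ}

lemma hasLogDerivAt_norm2_of_eq_horizontal (hp : HasDerivAt p p' x) (hc : 0 < c)
    (hpx : p x = (c, 0)) : HasLogDerivAt (fun y => norm2 (p y)) (p'.1 / c) x :=
  (hasDerivAt_norm2 hp (by simp [hpx, hc.ne'])).congr_deriv (by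
    simp only [hpx, norm2_horizontal hc.le, dot_horizontal]
    field_simp)

lemma hasLogDerivAt_omg_of_eq_horizontal {g : ℝ} (hg : 0 < g) (hp : HasDerivAt p p' x)
    (hc : 0 < c) (hpx : p x = (c, 0)) :
    HasLogDerivAt (fun y => omg g (p y)) (p'.1 / (2 * c)) x := by
  have := ((hasLogDerivAt_norm2_of_eq_horizontal hp hc hpx).const_mul g).sqrt
    (by rw [hpx, norm2_horizontal hc.le]; positivity)
  rwa [div_div, mul_comm c] at this

lemma hasLogDerivAt_ellBracket_of_eq_horizontal (hp : HasDerivAt p p' x)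
    (hr : HasDerivAt r r' x) (hc : 0 < c) (hpx : p x = (c, 0)) (hrx : r x = (c, 0)) :
    HasLogDerivAt (fun y => ellBracket (p y) (r y)) ((p'.1 + r'.1) / (2 * c)) x :=
  (hasDerivAt_ellBracket hp hr (hpx.trans hrx.symm) (by simp [hpx, hc.ne'])).congr_deriv (by
    simp only [hpx, hrx, ellBracket_self, norm2_horizontal hc.le, dot_horizontal, Prod.fst_add]
    field_simp)

lemma hasLogDerivAt_detuning_of_eq_horizontal {g : ℝ} (hg : 0 < g) (hp : HasDerivAt p p' x)
    (hr : HasDerivAt r r' x) (hc : 0 < c) (hpx : p x = (c, 0)) (hrx : r x = (c, 0)) :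
    HasLogDerivAt (fun y => detuning g (p y) (r y)) ((p'.1 + r'.1) / (4 * c)) x := by
  have hprx : p x + r x = (2 * c, 0) := by simp [hpx, hrx, two_mul]
  have h₁ := hasLogDerivAt_omg_of_eq_horizontal hg hp hc hpx
  have h₂ := hasLogDerivAt_omg_of_eq_horizontal hg hr hc hrx
  have h₃ := hasLogDerivAt_omg_of_eq_horizontal hg (hp.fun_add hr) (by positivity) hprx
  refine (HasDerivAt.fun_sub (HasDerivAt.fun_add h₁ h₂) h₃).congr_deriv ?_
  simp only [hpx, hrx, detuning, Prod.fst_add]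
  field_simp
  ring

end Paths

section Quartet

variable {p₁ p₂ p₃ p₄ : ℝ → ℝ × ℝ} {p₁' p₂' p₃' p₄' : ℝ × ℝ} {x : ℝ}

lemma contDiffAt_coefIII {g : ℝ} {n : WithTop ℕ∞} (hg : g ≠ 0) (hp₁ : ContDiffAt ℝ n p₁ x)
    (hp₂ : ContDiffAt ℝ n p₂ x) (hp₃ : ContDiffAt ℝ n p₃ x) (hp₄ : ContDiffAt ℝ n p₄ x)
    (hx₁ : p₁ x ≠ 0) (hx₂ : p₂ x ≠ 0) (hx₃ : p₃ x ≠ 0) (hx₄ : p₄ x ≠ 0)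
    (hx₁₂ : p₁ x + p₂ x ≠ 0) (hx₃₄ : p₃ x + p₄ x ≠ 0)
    (hd₁₂ : detuning g (p₁ x) (p₂ x) ≠ 0) (hd₃₄ : detuning g (p₃ x) (p₄ x) ≠ 0) :
    ContDiffAt ℝ n (fun y => coefIII g (p₁ y) (p₂ y) (p₃ y) (p₄ y)) x := by
  have hP := (((((contDiffAt_norm2 hp₁ hx₁).mul (contDiffAt_norm2 hp₂ hx₂)).mul
    (contDiffAt_norm2 hp₃ hx₃)).mul (contDiffAt_norm2 hp₄ hx₄)).mul
    (contDiffAt_norm2 (hp₁.add hp₂) hx₁₂)).mul (contDiffAt_norm2 (hp₃.add hp₄) hx₃₄)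
  have hPx : 0 < norm2 (p₁ x) * norm2 (p₂ x) * norm2 (p₃ x) * norm2 (p₄ x) *
      norm2 (p₁ x + p₂ x) * norm2 (p₃ x + p₄ x) := by
    have := norm2_pos hx₁; have := norm2_pos hx₂; have := norm2_pos hx₃; have := norm2_pos hx₄
    have := norm2_pos hx₁₂; have := norm2_pos hx₃₄
    positivity
  exact (((contDiffAt_const.mul (hP.rpow_const_of_ne hPx.ne')).mul
    (contDiffAt_ellBracket hp₁ hp₂ hx₁ hx₂ hx₁₂)).mul
    (contDiffAt_ellBracket hp₃ hp₄ hx₃ hx₄ hx₃₄)).mul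
    ((contDiffAt_const.div (contDiffAt_detuning hg hp₁ hp₂ hx₁ hx₂ hx₁₂) hd₁₂).add
      (contDiffAt_const.div (contDiffAt_detuning hg hp₃ hp₄ hx₃ hx₄ hx₃₄) hd₃₄))

lemma hasLogDerivAt_coefIII_of_eq_horizontal {g c : ℝ} (hg : 0 < g) (hc : 0 < c)
    (hp₁ : HasDerivAt p₁ p₁' x) (hp₂ : HasDerivAt p₂ p₂' x) (hp₃ : HasDerivAt p₃ p₃' x)
    (hp₄ : HasDerivAt p₄ p₄' x) (hx₁ : p₁ x = (c, 0)) (hx₂ : p₂ x = (c, 0))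
    (hx₃ : p₃ x = (c, 0)) (hx₄ : p₄ x = (c, 0)) :
    HasLogDerivAt (fun y => coefIII g (p₁ y) (p₂ y) (p₃ y) (p₄ y))
      (3 * (p₁'.1 + p₂'.1 + p₃'.1 + p₄'.1) / (4 * c)) x := by
  simp only [coefIII_eq_ellBracket_detuning]
  have h2c : 0 < 2 * c := by positivity
  have hx₁₂ : p₁ x + p₂ x = (2 * c, 0) := by simp [hx₁, hx₂, two_mul]
  have hx₃₄ : p₃ x + p₄ x = (2 * c, 0) := by simp [hx₃, hx₄, two_mul]
  have hP := (((((hasLogDerivAt_norm2_of_eq_horizontal hp₁ hc hx₁).mul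
    (hasLogDerivAt_norm2_of_eq_horizontal hp₂ hc hx₂)).mul
    (hasLogDerivAt_norm2_of_eq_horizontal hp₃ hc hx₃)).mul
    (hasLogDerivAt_norm2_of_eq_horizontal hp₄ hc hx₄)).mul
    (hasLogDerivAt_norm2_of_eq_horizontal (hp₁.fun_add hp₂) h2c hx₁₂)).mul
    (hasLogDerivAt_norm2_of_eq_horizontal (hp₃.fun_add hp₄) h2c hx₃₄)
  have hPx : 0 < norm2 (p₁ x) * norm2 (p₂ x) * norm2 (p₃ x) * norm2 (p₄ x) *
      norm2 (p₁ x + p₂ x) * norm2 (p₃ x + p₄ x) := by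
    rw [hx₁₂, hx₃₄, hx₁, hx₂, hx₃, hx₄, norm2_horizontal hc.le, norm2_horizontal h2c.le]
    positivity
  have hD₁₂ := hasLogDerivAt_detuning_of_eq_horizontal hg hp₁ hp₂ hc hx₁ hx₂
  have hD₃₄ := hasLogDerivAt_detuning_of_eq_horizontal hg hp₃ hp₄ hc hx₃ hx₄
  have hDx := detuning_self_ne_zero hg (a := (c, 0)) (by simp [hc.ne'])
  have := ((((hP.rpow_const hPx (1 / 4)).const_mul (-(√g / (128 * Real.pi ^ 2)))).mul
    (hasLogDerivAt_ellBracket_of_eq_horizontal hp₁ hp₂ hc hx₁ hx₂)).mul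
    (hasLogDerivAt_ellBracket_of_eq_horizontal hp₃ hp₄ hc hx₃ hx₄)).mul
    ((hD₁₂.one_div (by rw [hx₁, hx₂]; exact hDx)).add_of_eq
      (hD₃₄.one_div (by rw [hx₃, hx₄]; exact hDx)) (by simp only [hx₁, hx₂, hx₃, hx₄]))
  convert this using 1
  simp only [Prod.fst_add]
  field_simp
  ring

end Quartet

/-- Modulational expansion of the coefficient III. -/
theorem coefIII_modulational_expansion (g k₀ : ℝ) (hg : 0 < g) (hk₀ : 0 < k₀)
    (χ₁ χ₂ χ₃ χ₄ : ℝ × ℝ) :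
    (fun ε : ℝ =>
        coefIII g ((k₀, 0) + ε • χ₁) ((k₀, 0) + ε • χ₂)
            (-((k₀, 0) + ε • χ₃)) (-((k₀, 0) + ε • χ₄))
          - (-(Real.sqrt 2 + 1) * (k₀ ^ 3 / (16 * Real.pi ^ 2)) *
              (1 + 3 * ε / (4 * k₀) * (χ₁.1 + χ₂.1 + χ₃.1 + χ₄.1))))
      =O[𝓝[>] (0 : ℝ)] fun ε => ε ^ 2 := by
  have hpath (χ : ℝ × ℝ) : HasDerivAt (fun ε : ℝ => ((k₀, 0) + ε • χ : ℝ × ℝ)) χ 0 := by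
    simpa using ((hasDerivAt_id (0 : ℝ)).smul_const χ).const_add ((k₀, 0) : ℝ × ℝ)
  have hsmooth (χ : ℝ × ℝ) : ContDiffAt ℝ 2 (fun ε : ℝ => ((k₀, 0) + ε • χ : ℝ × ℝ)) 0 := by
    fun_prop
  have hpath₀ (χ : ℝ × ℝ) : ((k₀, 0) + (0 : ℝ) • χ : ℝ × ℝ) = (k₀, 0) := by simp
  have he : ((k₀, 0) : ℝ × ℝ) ≠ 0 := by simp [hk₀.ne']
  have hsum : ((k₀, 0) : ℝ × ℝ) + (k₀, 0) ≠ 0 := by simp [hk₀.ne']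
  have hd := detuning_self_ne_zero hg he
  have hf := contDiffAt_coefIII hg.ne' (hsmooth χ₁) (hsmooth χ₂) (hsmooth χ₃) (hsmooth χ₄)
    (by simpa only [hpath₀] using he) (by simpa only [hpath₀] using he)
    (by simpa only [hpath₀] using he) (by simpa only [hpath₀] using he)
    (by simpa only [hpath₀] using hsum) (by simpa only [hpath₀] using hsum)
    (by simpa only [hpath₀] using hd) (by simpa only [hpath₀] using hd)
  have hf' := hasLogDerivAt_coefIII_of_eq_horizontal hg hk₀ (hpath χ₁) (hpath χ₂) (hpath χ₃)
    (hpath χ₄) (hpath₀ χ₁) (hpath₀ χ₂) (hpath₀ χ₃) (hpath₀ χ₄)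
  simp only [coefIII_neg_neg]
  refine ((hf.isBigO_sub_sub_mul_sq hf').mono nhdsWithin_le_nhds).congr (fun ε => ?_) (by simp)
  simp only [hpath₀, coefIII_horizontal hg hk₀]
  ring
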